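/- arXiv:math/0612585 — 3 statements merged into one kernel-verified Lean document; each statement's English description precedes it below -/
import Mathlib

section
/- For a continuous excursion f and times s,t ∈ [0, τ(f)], the quotient metric space T_f satisfies the four-point condition: for all s₁,s₂,s₃,s₄ ∈ [0,τ(f)], d_f(s₁,s₂) + d_f(s₃,s₄) ≤ max( d_f(s₁,s₃)+d_f(s₂,s₄), d_f(s₁,s₄)+d_f(s₂,s₃) ), i.e. (T_f, d_{T_f}) is 0-hyperbolic. -/
open Set

private lemma arith_A (a b c : ℝ) :
    min (min a b + min b c) (min a (min b c) + b) ≤ a + c := by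
  rcases le_total a b with h|h <;> rcases le_total b c with h'|h' <;>
    rcases le_total a c with h''|h'' <;>
    simp [min_def, *] <;> first | (split_ifs <;> linarith) | linarith

private lemma arith_B (a b c : ℝ) :
    min (a + c) (min a (min b c) + b) ≤ min a b + min b c := by
  rcases le_total a b with h|h <;> rcases le_total b c with h'|h' <;>
    rcases le_total a c with h''|h'' <;>
    simp [min_def, *] <;> first | (split_ifs <;> linarith) | linarith

private lemma arith_C (a b c : ℝ) :
    min (a + c) (min a b + min b c) ≤ min a (min b c) + b := by
  rcases le_total a b with h|h <;> rcases le_total b c with h'|h' <;>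
    rcases le_total a c with h''|h'' <;>
    simp [min_def, *] <;> first | (split_ifs <;> linarith) | linarith

private lemma key4 (m : ℝ → ℝ → ℝ)
    (hsymm : ∀ s t, m s t = m t s)
    (hsplit : ∀ s t u, s ≤ t → t ≤ u → m s u = min (m s t) (m t u)) :
    ∀ s₁ s₂ s₃ s₄, min (m s₁ s₃ + m s₂ s₄) (m s₁ s₄ + m s₂ s₃) ≤ m s₁ s₂ + m s₃ s₄ := by
  -- sorted cases
  have hA : ∀ x₁ x₂ x₃ x₄ : ℝ, x₁ ≤ x₂ → x₂ ≤ x₃ → x₃ ≤ x₄ →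
      min (m x₁ x₃ + m x₂ x₄) (m x₁ x₄ + m x₂ x₃) ≤ m x₁ x₂ + m x₃ x₄ := by
    intro x₁ x₂ x₃ x₄ h12 h23 h34
    rw [hsplit x₁ x₂ x₃ h12 h23, hsplit x₂ x₃ x₄ h23 h34,
      hsplit x₁ x₂ x₄ h12 (h23.trans h34), hsplit x₂ x₃ x₄ h23 h34]
    exact arith_A _ _ _
  have hB : ∀ x₁ x₂ x₃ x₄ : ℝ, x₁ ≤ x₂ → x₂ ≤ x₃ → x₃ ≤ x₄ →
      min (m x₁ x₂ + m x₃ x₄) (m x₁ x₄ + m x₃ x₂) ≤ m x₁ x₃ + m x₂ x₄ := by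
    intro x₁ x₂ x₃ x₄ h12 h23 h34
    rw [hsplit x₁ x₂ x₃ h12 h23, hsplit x₂ x₃ x₄ h23 h34,
      hsplit x₁ x₂ x₄ h12 (h23.trans h34), hsplit x₂ x₃ x₄ h23 h34,
      hsymm x₃ x₂]
    exact arith_B _ _ _
  have hC : ∀ x₁ x₂ x₃ x₄ : ℝ, x₁ ≤ x₂ → x₂ ≤ x₃ → x₃ ≤ x₄ →
      min (m x₁ x₂ + m x₄ x₃) (m x₁ x₃ + m x₄ x₂) ≤ m x₁ x₄ + m x₂ x₃ := by
    intro x₁ x₂ x₃ x₄ h12 h23 h34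
    rw [hsymm x₄ x₃, hsymm x₄ x₂, hsplit x₁ x₂ x₃ h12 h23,
      hsplit x₁ x₂ x₄ h12 (h23.trans h34), hsplit x₂ x₃ x₄ h23 h34]
    exact arith_C _ _ _
  -- reduce to s₁ ≤ s₂, s₃ ≤ s₄, s₁ ≤ s₃
  have H : ∀ s₁ s₂ s₃ s₄ : ℝ, s₁ ≤ s₂ → s₃ ≤ s₄ → s₁ ≤ s₃ →
      min (m s₁ s₃ + m s₂ s₄) (m s₁ s₄ + m s₂ s₃) ≤ m s₁ s₂ + m s₃ s₄ := by
    intro s₁ s₂ s₃ s₄ h12 h34 h13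
    rcases le_total s₂ s₃ with h23 | h32
    · exact hA s₁ s₂ s₃ s₄ h12 h23 h34
    · rcases le_total s₂ s₄ with h24 | h42
      · exact hB s₁ s₃ s₂ s₄ h13 h32 h24
      · exact hC s₁ s₃ s₄ s₂ h13 h34 h42
  intro s₁ s₂ s₃ s₄
  rcases le_total s₁ s₂ with h12 | h21 <;> rcases le_total s₃ s₄ with h34 | h43
  · rcases le_total s₁ s₃ with h | h
    · exact H s₁ s₂ s₃ s₄ h12 h34 h
    · have := H s₃ s₄ s₁ s₂ h34 h12 h
      simp only [hsymm, add_comm] at this ⊢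
      rw [min_le_iff] at this ⊢
      tauto
  · rcases le_total s₁ s₄ with h | h
    · have := H s₁ s₂ s₄ s₃ h12 h43 h
      simp only [hsymm, add_comm] at this ⊢
      rw [min_le_iff] at this ⊢
      tauto
    · have := H s₄ s₃ s₁ s₂ h43 h12 h
      simp only [hsymm, add_comm] at this ⊢
      rw [min_le_iff] at this ⊢
      tauto
  · rcases le_total s₂ s₃ with h | h
    · have := H s₂ s₁ s₃ s₄ h21 h34 h
      simp only [hsymm, add_comm] at this ⊢
      rw [min_le_iff] at this ⊢
      tauto
    · have := H s₃ s₄ s₂ s₁ h34 h21 h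
      simp only [hsymm, add_comm] at this ⊢
      rw [min_le_iff] at this ⊢
      tauto
  · rcases le_total s₂ s₄ with h | h
    · have := H s₂ s₁ s₄ s₃ h21 h43 h
      simp only [hsymm, add_comm] at this ⊢
      rw [min_le_iff] at this ⊢
      tauto
    · have := H s₄ s₃ s₂ s₁ h43 h21 h
      simp only [hsymm, add_comm] at this ⊢
      rw [min_le_iff] at this ⊢
      tauto

/-- The excursion distance `d_f` satisfies the four-point condition, i.e. the coded tree
`(T_f, d_{T_f})` is 0-hyperbolic. -/
theorem stmt_2 (f : ℝ → ℝ) (τ : ℝ) (hτ : 0 < τ) (hf : Continuous f)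
    (hnn : ∀ t, 0 ≤ f t)
    (hexc : ∀ t, 0 ≤ t → (0 < f t ↔ t ∈ Ioo 0 τ)) :
    let d : ℝ → ℝ → ℝ := fun s t =>
      f s + f t - 2 * sInf (f '' Icc (min s t) (max s t))
    ∀ s₁ ∈ Icc 0 τ, ∀ s₂ ∈ Icc 0 τ, ∀ s₃ ∈ Icc 0 τ, ∀ s₄ ∈ Icc 0 τ,
      d s₁ s₂ + d s₃ s₄ ≤ max (d s₁ s₃ + d s₂ s₄) (d s₁ s₄ + d s₂ s₃) := by
  intro d s₁ _ s₂ _ s₃ _ s₄ _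
  set M : ℝ → ℝ → ℝ := fun s t => sInf (f '' Icc (min s t) (max s t)) with hM
  have hd : ∀ s t, d s t = f s + f t - 2 * M s t := fun s t => rfl
  have hbdd : ∀ s : Set ℝ, BddBelow (f '' s) := by
    intro s
    refine ⟨0, ?_⟩
    rintro x ⟨y, -, rfl⟩
    exact hnn y
  have hsymm : ∀ s t, M s t = M t s := by
    intro s t
    simp [hM, min_comm, max_comm]
  have hsplit : ∀ s t u, s ≤ t → t ≤ u → M s u = min (M s t) (M t u) := by
    intro s t u hst htu
    have hsu : s ≤ u := hst.trans htu
    simp only [hM]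
    rw [min_eq_left hsu, max_eq_right hsu, min_eq_left hst, max_eq_right hst,
      min_eq_left htu, max_eq_right htu,
      ← Set.Icc_union_Icc_eq_Icc hst htu, Set.image_union]
    exact csInf_union (hbdd _) ((Set.nonempty_Icc.2 hst).image f)
      (hbdd _) ((Set.nonempty_Icc.2 htu).image f)
  have key := key4 M hsymm hsplit s₁ s₂ s₃ s₄
  simp only [hd]
  rcases le_total (M s₁ s₃ + M s₂ s₄) (M s₁ s₄ + M s₂ s₃) with h | h
  · rw [min_eq_left h] at key
    have := le_max_left (f s₁ + f s₃ - 2 * M s₁ s₃ + (f s₂ + f s₄ - 2 * M s₂ s₄))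
      (f s₁ + f s₄ - 2 * M s₁ s₄ + (f s₂ + f s₃ - 2 * M s₂ s₃))
    linarith
  · rw [min_eq_right h] at key
    have := le_max_right (f s₁ + f s₃ - 2 * M s₁ s₃ + (f s₂ + f s₄ - 2 * M s₂ s₄))
      (f s₁ + f s₄ - 2 * M s₁ s₄ + (f s₂ + f s₃ - 2 * M s₂ s₃))
    linarith
end

section
/- For a normalised Brownian excursion W, the volume of the ball of radius r about the root satisfies the exponential tail bound: for all θ ∈ (0,1), r > 0 and λ ≥ 1, P(μ(B(ρ,r)) ≥ r²λ) ≤ e^{-θλ}/(1-θ)². In particular there exist constants c₇, c₈ ∈ (0,∞) with P(μ(B(ρ,r)) ≥ r²λ) ≤ c₇ e^{-c₈ λ} for all r > 0, λ ≥ 1. -/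
/-!
Exponential Markov inequality: expanding `exp (θ V / s)` into its power series and inserting the
moment bounds `E[V^k] ≤ (k+1)! s^k` gives `E[exp (θ V / s)] ≤ ∑ (k+1) θ^k = (1-θ)⁻²`, hence
`P(V ≥ s λ) ≤ e^{-θλ} (1-θ)⁻²`. Taking `θ = 1/2` gives the constants `c₇ = 4`, `c₈ = 1/2`.
-/

open MeasureTheory Set
open scoped Nat

lemma ENNReal.ofReal_exp_le_tsum_ofReal_pow_div_factorial (x : ℝ) :
    ENNReal.ofReal (Real.exp x) ≤ ∑' k : ℕ, ENNReal.ofReal (x ^ k / k !) := by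
  rcases le_or_gt 0 x with hx | hx
  · rw [← ENNReal.ofReal_tsum_of_nonneg (fun k => by positivity)
      (Real.summable_pow_div_factorial x), Real.exp_eq_exp_ℝ, NormedSpace.exp_eq_tsum_div]
  · calc ENNReal.ofReal (Real.exp x) ≤ ENNReal.ofReal (x ^ 0 / (0 !)) := by
          simpa using (Real.exp_lt_one_iff.2 hx).le
      _ ≤ _ := ENNReal.le_tsum 0

lemma ENNReal.tsum_ofReal_succ_mul_geometric {θ : ℝ} (h0 : 0 ≤ θ) (h1 : θ < 1) :
    ∑' k : ℕ, ENNReal.ofReal ((k + 1) * θ ^ k) = ENNReal.ofReal (1 / (1 - θ) ^ 2) := by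
  have h := hasSum_choose_mul_geometric_of_norm_lt_one 1 (r := θ)
    (by rwa [Real.norm_of_nonneg h0])
  simp only [Nat.choose_one_right, Nat.cast_add, Nat.cast_one, one_add_one_eq_two] at h
  rw [← ENNReal.ofReal_tsum_of_nonneg (fun k => by positivity) h.summable, h.tsum_eq]

section Chernoff

variable {Ω : Type*} [MeasurableSpace Ω] {μ : Measure Ω} {f : Ω → ℝ}

lemma lintegral_exp_mul_le_tsum_moments (hf : Measurable f) {t : ℝ} (ht : 0 ≤ t) :
    ∫⁻ ω, ENNReal.ofReal (Real.exp (t * f ω)) ∂μ ≤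
      ∑' k : ℕ, ENNReal.ofReal (t ^ k / k !) * ∫⁻ ω, ENNReal.ofReal (f ω ^ k) ∂μ := by
  calc ∫⁻ ω, ENNReal.ofReal (Real.exp (t * f ω)) ∂μ
      ≤ ∫⁻ ω, ∑' k : ℕ, ENNReal.ofReal (t ^ k / k !) * ENNReal.ofReal (f ω ^ k) ∂μ := by
        refine lintegral_mono fun ω =>
          (ENNReal.ofReal_exp_le_tsum_ofReal_pow_div_factorial _).trans_eq (tsum_congr fun k => ?_)
        rw [← ENNReal.ofReal_mul (by positivity), mul_pow, div_mul_eq_mul_div]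
    _ = _ := by
        rw [lintegral_tsum fun k => ((hf.pow_const k).ennreal_ofReal.const_mul _).aemeasurable]
        exact tsum_congr fun k => lintegral_const_mul _ (hf.pow_const k).ennreal_ofReal

lemma measure_le_le_exp_mul_lintegral_exp (hf : Measurable f) {t : ℝ} (ht : 0 ≤ t) (a : ℝ) :
    μ {ω | a ≤ f ω} ≤
      ENNReal.ofReal (Real.exp (-(t * a))) * ∫⁻ ω, ENNReal.ofReal (Real.exp (t * f ω)) ∂μ := by
  have hsub : {ω | a ≤ f ω} ⊆
      {ω | ENNReal.ofReal (Real.exp (t * a)) ≤ ENNReal.ofReal (Real.exp (t * f ω))} :=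
    fun ω hω => ENNReal.ofReal_le_ofReal (Real.exp_le_exp.2 (by gcongr; exact hω))
  calc μ {ω | a ≤ f ω}
      = ENNReal.ofReal (Real.exp (-(t * a))) *
          (ENNReal.ofReal (Real.exp (t * a)) * μ {ω | a ≤ f ω}) := by
        rw [← mul_assoc, ← ENNReal.ofReal_mul (Real.exp_pos _).le, ← Real.exp_add,
          neg_add_cancel, Real.exp_zero, ENNReal.ofReal_one, one_mul]
    _ ≤ _ := by
        gcongr
        exact (mul_le_mul_right (measure_mono hsub) _).trans
          (mul_meas_ge_le_lintegral (Real.measurable_exp.comp (hf.const_mul t)).ennreal_ofReal _)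

variable {s : ℝ}

lemma lintegral_exp_le_of_moment_le_factorial_succ (hf : Measurable f) (hs : 0 < s)
    (hmom : ∀ k : ℕ, ∫⁻ ω, ENNReal.ofReal (f ω ^ k) ∂μ ≤ ENNReal.ofReal ((k + 1)! * s ^ k))
    {θ : ℝ} (h0 : 0 ≤ θ) (h1 : θ < 1) :
    ∫⁻ ω, ENNReal.ofReal (Real.exp (θ / s * f ω)) ∂μ ≤ ENNReal.ofReal (1 / (1 - θ) ^ 2) := by
  calc ∫⁻ ω, ENNReal.ofReal (Real.exp (θ / s * f ω)) ∂μ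
      ≤ ∑' k : ℕ, ENNReal.ofReal ((θ / s) ^ k / k !) * ∫⁻ ω, ENNReal.ofReal (f ω ^ k) ∂μ :=
        lintegral_exp_mul_le_tsum_moments hf (by positivity)
    _ ≤ ∑' k : ℕ, ENNReal.ofReal ((θ / s) ^ k / k !) * ENNReal.ofReal ((k + 1)! * s ^ k) :=
        ENNReal.tsum_le_tsum fun k => by gcongr; exact hmom k
    _ = ∑' k : ℕ, ENNReal.ofReal ((k + 1) * θ ^ k) := tsum_congr fun k => by
        rw [← ENNReal.ofReal_mul (by positivity), Nat.factorial_succ]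
        push_cast
        rw [div_pow]
        field_simp
    _ = _ := ENNReal.tsum_ofReal_succ_mul_geometric h0 h1

lemma measure_mul_le_le_exp_div_sq (hf : Measurable f) (hs : 0 < s)
    (hmom : ∀ k : ℕ, ∫⁻ ω, ENNReal.ofReal (f ω ^ k) ∂μ ≤ ENNReal.ofReal ((k + 1)! * s ^ k))
    {θ : ℝ} (h0 : 0 ≤ θ) (h1 : θ < 1) (lam : ℝ) :
    μ {ω | s * lam ≤ f ω} ≤ ENNReal.ofReal (Real.exp (-θ * lam) / (1 - θ) ^ 2) := by
  calc μ {ω | s * lam ≤ f ω}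
      ≤ ENNReal.ofReal (Real.exp (-(θ / s * (s * lam)))) *
          ∫⁻ ω, ENNReal.ofReal (Real.exp (θ / s * f ω)) ∂μ :=
        measure_le_le_exp_mul_lintegral_exp hf (by positivity) _
    _ ≤ ENNReal.ofReal (Real.exp (-θ * lam)) * ENNReal.ofReal (1 / (1 - θ) ^ 2) := by
        rw [show θ / s * (s * lam) = θ * lam by field_simp, ← neg_mul]
        gcongr
        exact lintegral_exp_le_of_moment_le_factorial_succ hf hs hmom h0 h1
    _ = _ := by rw [← ENNReal.ofReal_mul (Real.exp_pos _).le, mul_one_div]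

end Chernoff

theorem stmt_4_general {Ω : Type*} [MeasurableSpace Ω] (P : Measure Ω)
    (V : ℝ → Ω → ℝ) (hmeas : ∀ r, Measurable (V r))
    (hmom : ∀ (k : ℕ) (r : ℝ), 0 < r →
      ∫⁻ ω, ENNReal.ofReal ((V r ω) ^ k) ∂P ≤
        ENNReal.ofReal ((Nat.factorial (k + 1) : ℝ) * r ^ (2 * k))) :
    (∀ θ ∈ Ioo (0:ℝ) 1, ∀ r : ℝ, 0 < r → ∀ lam : ℝ, 1 ≤ lam →
      P {ω | r ^ 2 * lam ≤ V r ω} ≤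
        ENNReal.ofReal (Real.exp (-θ * lam) / (1 - θ) ^ 2)) ∧
    ∃ c₇ > (0:ℝ), ∃ c₈ > (0:ℝ), ∀ r : ℝ, 0 < r → ∀ lam : ℝ, 1 ≤ lam →
      P {ω | r ^ 2 * lam ≤ V r ω} ≤ ENNReal.ofReal (c₇ * Real.exp (-c₈ * lam)) := by
  have tail : ∀ θ ∈ Ioo (0:ℝ) 1, ∀ r : ℝ, 0 < r → ∀ lam : ℝ, 1 ≤ lam →
      P {ω | r ^ 2 * lam ≤ V r ω} ≤ ENNReal.ofReal (Real.exp (-θ * lam) / (1 - θ) ^ 2) := by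
    rintro θ ⟨h0, h1⟩ r hr lam -
    refine measure_mul_le_le_exp_div_sq (hmeas r) (by positivity) (fun k => ?_) h0.le h1 lam
    rw [← pow_mul]
    exact hmom k r hr
  refine ⟨tail, 4, by norm_num, 1 / 2, by norm_num, fun r hr lam hlam => ?_⟩
  convert tail (1 / 2) ⟨by norm_num, by norm_num⟩ r hr lam hlam using 2
  ring

/-- Exponential tail bound for the volume of the ball about the root of the CRT:
if `V r = μ(B(ρ,r))` satisfies Chung's moment bounds `E[(V r)^k] ≤ (k+1)! r^{2k}`, then
for all `θ ∈ (0,1)`, `r > 0`, `λ ≥ 1`, `P(V r ≥ r²λ) ≤ e^{-θλ}/(1-θ)²`; in particular there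
are constants `c₇, c₈ ∈ (0,∞)` with `P(V r ≥ r²λ) ≤ c₇ e^{-c₈λ}`. -/
theorem stmt_4 {Ω : Type*} [MeasurableSpace Ω] (P : Measure Ω) [IsProbabilityMeasure P]
    (V : ℝ → Ω → ℝ) (hnn : ∀ r ω, 0 ≤ V r ω) (hmeas : ∀ r, Measurable (V r))
    (hmom : ∀ (k : ℕ) (r : ℝ), 0 < r →
      ∫⁻ ω, ENNReal.ofReal ((V r ω) ^ k) ∂P ≤
        ENNReal.ofReal ((Nat.factorial (k + 1) : ℝ) * r ^ (2 * k))) :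
    (∀ θ ∈ Ioo (0:ℝ) 1, ∀ r : ℝ, 0 < r → ∀ lam : ℝ, 1 ≤ lam →
      P {ω | r ^ 2 * lam ≤ V r ω} ≤
        ENNReal.ofReal (Real.exp (-θ * lam) / (1 - θ) ^ 2)) ∧
    ∃ c₇ > (0:ℝ), ∃ c₈ > (0:ℝ), ∀ r : ℝ, 0 < r → ∀ lam : ℝ, 1 ≤ lam →
      P {ω | r ^ 2 * lam ≤ V r ω} ≤ ENNReal.ofReal (c₇ * Real.exp (-c₈ * lam)) :=
  stmt_4_general P V hmeas hmom
end

section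
/- Let W : [0,1] → ℝ≥0 be a continuous excursion satisfying the modulus of continuity bound osc(W,[0,1],δ) ≤ c√(δ ln(1/δ)) for all δ ∈ (0,η), for some constants c > 0, η ∈ (0,1). Then there exist constants c', r₁ > 0 such that for all r ∈ (0,r₁) and all s ∈ [0,1]: |W_s - W_t| > r/3 implies |s - t| ≥ c' r² / ln(1/r). Consequently, inf_{σ∈T} μ(B(σ,r)) ≥ c'' r² (ln(1/r))^{-1} for all sufficiently small r, where T is the tree coded by W. -/
/-!
At scale `δ(r) = K r² / ln(1/r)` the modulus of continuity `c √(δ ln(1/δ))` is at most `r/6`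
once `K` is small compared with `c⁻²`, because `ln(1/δ) ≤ 4 ln(1/r)`. So `W` moves by at most
`r/6` on every window of length `δ(r)`, which gives the first claim. For the second, every `t`
within `δ(r)` of `s` is at tree distance `W s + W t - 2 min_{[s,t]} W ≤ 3 · r/6 < r` from `s`,
and the points of `[0,1]` within `δ(r)` of `s` have Lebesgue measure at least `δ(r)`.
-/

open MeasureTheory Set Real

lemma one_le_log_one_div {r : ℝ} (hr : 0 < r) (hre : r ≤ exp (-1)) : 1 ≤ log (1 / r) := by
  rw [le_log_iff_exp_le (by positivity), le_div_iff₀ hr]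
  calc exp 1 * r ≤ exp 1 * exp (-1) := by gcongr
    _ = 1 := by rw [← exp_add]; norm_num

lemma log_one_div_scale_le {K r : ℝ} (hK : 0 < K) (hr : 0 < r) (hrK : r ≤ K)
    (hre : r ≤ exp (-1)) :
    log (1 / (K * r ^ 2 / log (1 / r))) ≤ 4 * log (1 / r) := by
  set L := log (1 / r)
  have hL1 : 1 ≤ L := one_le_log_one_div hr hre
  have hLr : L ≤ 1 / r := (log_le_sub_one_of_pos (by positivity)).trans (by linarith)
  have hinv : 1 / (K * r ^ 2 / L) ≤ (1 / r) ^ 4 := by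
    rw [one_div_div, div_le_iff₀ (by positivity)]
    calc L ≤ 1 / r := hLr
      _ = (1 / r) ^ 4 * (r * r ^ 2) := by field_simp
      _ ≤ (1 / r) ^ 4 * (K * r ^ 2) := by gcongr
  calc log (1 / (K * r ^ 2 / L)) ≤ log ((1 / r) ^ 4) :=
        log_le_log (by positivity) hinv
    _ = 4 * L := by rw [log_pow, Nat.cast_ofNat]

lemma exists_scale_modulus_le {c η : ℝ} (hc : 0 < c) (hη : 0 < η) :
    ∃ K > (0:ℝ), ∃ r₁ > (0:ℝ), ∀ r ∈ Ioo (0:ℝ) r₁,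
      K * r ^ 2 / log (1 / r) ∈ Ioo 0 η ∧
      c * √(K * r ^ 2 / log (1 / r) * log (1 / (K * r ^ 2 / log (1 / r)))) ≤ r / 6 := by
  set K := min (1 / (144 * c ^ 2)) 1
  have hK0 : 0 < K := lt_min (by positivity) one_pos
  have hK1 : K ≤ 1 := min_le_right _ _
  have hKc : K ≤ 1 / (144 * c ^ 2) := min_le_left _ _
  refine ⟨K, hK0, min K (min (exp (-1)) η), by positivity, fun r ⟨hr0, hr⟩ ↦ ?_⟩
  simp only [lt_min_iff] at hr
  obtain ⟨hrK, hre, hrη⟩ := hr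
  have hr1 : r < 1 := hre.trans (by rw [exp_lt_one_iff]; norm_num)
  set L := log (1 / r)
  have hL1 : 1 ≤ L := one_le_log_one_div hr0 hre.le
  set δ := K * r ^ 2 / L
  have hδL : δ * L = K * r ^ 2 := div_mul_cancel₀ _ (by positivity)
  have hδ0 : 0 < δ := by positivity
  have hδη : δ < η :=
    calc δ ≤ δ * L := le_mul_of_one_le_right hδ0.le hL1
      _ = K * r ^ 2 := hδL
      _ ≤ 1 * r ^ 2 := by gcongr
      _ < η := by nlinarith
  have hprod : δ * log (1 / δ) ≤ (r / (6 * c)) ^ 2 :=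
    calc δ * log (1 / δ) ≤ δ * (4 * L) := by
          gcongr; exact log_one_div_scale_le hK0 hr0 hrK.le hre.le
      _ = 4 * K * r ^ 2 := by linear_combination 4 * hδL
      _ ≤ 4 * (1 / (144 * c ^ 2)) * r ^ 2 := by gcongr
      _ = (r / (6 * c)) ^ 2 := by field_simp; ring
  refine ⟨⟨hδ0, hδη⟩, ?_⟩
  calc c * √(δ * log (1 / δ)) ≤ c * (r / (6 * c)) := by
        gcongr; exact sqrt_le_iff.2 ⟨by positivity, hprod⟩
    _ = r / 6 := by field_simp

lemma add_sub_two_mul_sInf_image_le {W : ℝ → ℝ} {s t ε : ℝ}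
    (h : ∀ u ∈ Icc (min s t) (max s t), |W u - W s| ≤ ε) :
    W s + W t - 2 * sInf (W '' Icc (min s t) (max s t)) ≤ 3 * ε := by
  have ht : W t ≤ W s + ε := by
    linarith [(abs_le.1 (h t ⟨min_le_right _ _, le_max_right _ _⟩)).2]
  have hinf : W s - ε ≤ sInf (W '' Icc (min s t) (max s t)) := by
    refine le_csInf ((nonempty_Icc.2 min_le_max).image W) ?_
    rintro _ ⟨u, hu, rfl⟩
    linarith [(abs_le.1 (h u hu)).1]
  linarith

lemma Icc_inter_closedBall_subset {W : ℝ → ℝ} {s δ ε r : ℝ} (hs : s ∈ Icc (0:ℝ) 1)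
    (hW : ∀ u ∈ Icc (0:ℝ) 1 ∩ Metric.closedBall s δ, |W u - W s| ≤ ε) (hεr : 3 * ε < r) :
    Icc (0:ℝ) 1 ∩ Metric.closedBall s δ ⊆
      {t | t ∈ Icc (0:ℝ) 1 ∧ W s + W t - 2 * sInf (W '' Icc (min s t) (max s t)) < r} := by
  intro t ht
  have hδ : 0 ≤ δ := dist_nonneg.trans ht.2
  have hst : Icc (min s t) (max s t) ⊆ Icc (0:ℝ) 1 ∩ Metric.closedBall s δ := by
    rw [Real.closedBall_eq_Icc] at ht ⊢
    exact (ordConnected_Icc.inter ordConnected_Icc).uIcc_subset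
      ⟨hs, by constructor <;> linarith⟩ ht
  exact ⟨ht.1, (add_sub_two_mul_sInf_image_le fun u hu ↦ hW u (hst hu)).trans_lt hεr⟩

lemma ofReal_le_volume_Icc_inter_closedBall {s δ : ℝ} (hs : s ∈ Icc (0:ℝ) 1) (hδ0 : 0 ≤ δ)
    (hδ1 : δ ≤ 1) : ENNReal.ofReal δ ≤ volume (Icc (0:ℝ) 1 ∩ Metric.closedBall s δ) := by
  rw [Real.closedBall_eq_Icc, Icc_inter_Icc, Real.volume_Icc]
  gcongr
  rcases max_cases 0 (s - δ) with ⟨h₁, _⟩ | ⟨h₁, _⟩ <;>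
    rcases min_cases 1 (s + δ) with ⟨h₂, _⟩ | ⟨h₂, _⟩ <;> rw [h₁, h₂] <;> linarith [hs.1, hs.2]

theorem stmt_17_general (W : ℝ → ℝ)
    (c η : ℝ) (hc : 0 < c) (hη : η ∈ Ioo (0:ℝ) 1)
    (hosc : ∀ δ ∈ Ioo (0:ℝ) η, ∀ u ∈ Icc (0:ℝ) 1, ∀ v ∈ Icc (0:ℝ) 1,
      |u - v| ≤ δ → |W u - W v| ≤ c * Real.sqrt (δ * Real.log (1 / δ))) :
    (∃ c' > (0:ℝ), ∃ r₁ > (0:ℝ), ∀ r ∈ Ioo (0:ℝ) r₁, ∀ s ∈ Icc (0:ℝ) 1, ∀ t ∈ Icc (0:ℝ) 1,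
      r / 3 < |W s - W t| → c' * r ^ 2 / Real.log (1 / r) ≤ |s - t|) ∧
    (∃ c'' > (0:ℝ), ∃ r₂ > (0:ℝ), ∀ r ∈ Ioo (0:ℝ) r₂, ∀ s ∈ Icc (0:ℝ) 1,
      ENNReal.ofReal (c'' * r ^ 2 / Real.log (1 / r)) ≤
        volume {t | t ∈ Icc (0:ℝ) 1 ∧
          W s + W t - 2 * sInf (W '' Icc (min s t) (max s t)) < r}) := by
  obtain ⟨K, hK, r₁, hr₁, hscale⟩ := exists_scale_modulus_le hc hη.1
  refine ⟨⟨K, hK, r₁, hr₁, fun r hr s hs t ht hst ↦ ?_⟩, ⟨K, hK, r₁, hr₁, fun r hr s hs ↦ ?_⟩⟩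
  · obtain ⟨hδ, hmod⟩ := hscale r hr
    by_contra! hlt
    linarith [hosc _ hδ s hs t ht hlt.le, hr.1]
  · obtain ⟨hδ, hmod⟩ := hscale r hr
    have hW : ∀ u ∈ Icc (0:ℝ) 1 ∩ Metric.closedBall s (K * r ^ 2 / log (1 / r)),
        |W u - W s| ≤ r / 6 := fun u hu ↦
      (hosc _ hδ u hu.1 s hs (by rw [← Real.dist_eq]; exact hu.2)).trans hmod
    calc ENNReal.ofReal (K * r ^ 2 / log (1 / r))
        ≤ volume (Icc (0:ℝ) 1 ∩ Metric.closedBall s (K * r ^ 2 / log (1 / r))) :=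
          ofReal_le_volume_Icc_inter_closedBall hs hδ.1.le (hδ.2.trans hη.2).le
      _ ≤ _ := measure_mono (Icc_inter_closedBall_subset hs hW (by linarith [hr.1]))

/-- If the excursion `W` coding the tree `T` satisfies the modulus of continuity bound
`osc(W,[0,1],δ) ≤ c√(δ ln(1/δ))` for `δ ∈ (0,η)`, then there are `c', r₁ > 0` such that for
`r ∈ (0,r₁)` and `s,t ∈ [0,1]`, `|W_s - W_t| > r/3` implies `|s-t| ≥ c' r²/ln(1/r)`;
consequently `inf_σ μ(B(σ,r)) ≥ c'' r² (ln(1/r))⁻¹` for all sufficiently small `r`. -/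
theorem stmt_17 (W : ℝ → ℝ) (hW : Continuous W) (hnn : ∀ t, 0 ≤ W t)
    (hexc : ∀ t, 0 < W t ↔ t ∈ Ioo (0:ℝ) 1)
    (c η : ℝ) (hc : 0 < c) (hη : η ∈ Ioo (0:ℝ) 1)
    (hosc : ∀ δ ∈ Ioo (0:ℝ) η, ∀ u ∈ Icc (0:ℝ) 1, ∀ v ∈ Icc (0:ℝ) 1,
      |u - v| ≤ δ → |W u - W v| ≤ c * Real.sqrt (δ * Real.log (1 / δ))) :
    (∃ c' > (0:ℝ), ∃ r₁ > (0:ℝ), ∀ r ∈ Ioo (0:ℝ) r₁, ∀ s ∈ Icc (0:ℝ) 1, ∀ t ∈ Icc (0:ℝ) 1,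
      r / 3 < |W s - W t| → c' * r ^ 2 / Real.log (1 / r) ≤ |s - t|) ∧
    (∃ c'' > (0:ℝ), ∃ r₂ > (0:ℝ), ∀ r ∈ Ioo (0:ℝ) r₂, ∀ s ∈ Icc (0:ℝ) 1,
      ENNReal.ofReal (c'' * r ^ 2 / Real.log (1 / r)) ≤
        volume {t | t ∈ Icc (0:ℝ) 1 ∧
          W s + W t - 2 * sInf (W '' Icc (min s t) (max s t)) < r}) :=
  stmt_17_general W c η hc hη hosc
end
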